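/- arXiv:2004.07077 — 11 statements merged into one kernel-verified Lean document; each statement's English description precedes it below -/
import Mathlib

section
/- Every vertex of the polytope B^T = {(u_{t−1}, u_t, u_{t+1}, s_t, s_{t+1}, J) ∈ [0,1]^6 : J ≥ s_t + s_{t+1} − u_{t+1}, J ≤ s_t, s_t ≤ u_t, s_t ≤ 1 − u_{t−1}, s_{t+1} ≤ u_{t+1}, s_{t+1} ≤ 1 − u_t} has all integer (0/1) coordinates; equivalently, B^T is an integral polytope. -/
/-!
Over a point `(σ, τ) = (s_t, s_{t+1})` of the triangle `σ, τ ≥ 0, σ + τ ≤ 1`, the fibre of `B^T`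
is the product of the intervals `u_{t-1} ∈ [0, 1 - σ]` and `u_t ∈ [σ, 1 - τ]` with the
quadrilateral of `(u_{t+1}, J)` with vertices `(1, 0), (1, σ), (τ, σ), (σ + τ, 0)`.
An extreme point of `B^T` is a vertex of its fibre, so it lies on an affine section of `B^T`
over the whole triangle built from these vertex formulas. Pulling extremality back along the
section, `(s_t, s_{t+1})` is a vertex of the triangle, and the vertex formulas then only take
the values 0 and 1.
-/

/-- The polytope `B^T` in variables (u_{t-1}, u_t, u_{t+1}, s_t, s_{t+1}, J),
indexed as x 0, ..., x 5. -/
def polytopeBT : Set (Fin 6 → ℝ) :=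
  {x | (∀ i, 0 ≤ x i ∧ x i ≤ 1) ∧
    x 5 ≥ x 3 + x 4 - x 2 ∧
    x 5 ≤ x 3 ∧
    x 3 ≤ x 1 ∧
    x 3 ≤ 1 - x 0 ∧
    x 4 ≤ x 2 ∧
    x 4 ≤ 1 - x 1}

open Set AffineMap

section ExtremePoints

variable {E F : Type*} [AddCommGroup E] [Module ℝ E] [AddCommGroup F] [Module ℝ F]

theorem eq_zero_or_eq_zero_of_mem_extremePoints_of_add_smul_mem {A : Set E} {x v : E}
    {l u : ℝ} (hx : x ∈ A.extremePoints ℝ) (hv : v ≠ 0) (hl : x + l • v ∈ A)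
    (hu : x + u • v ∈ A) (hl₀ : l ≤ 0) (hu₀ : 0 ≤ u) : l = 0 ∨ u = 0 := by
  have hseg : x ∈ segment ℝ (x + l • v) (x + u • v) := by
    have h₀ : (0 : ℝ) ∈ segment ℝ l u := by
      rw [segment_eq_Icc (hl₀.trans hu₀)]
      exact ⟨hl₀, hu₀⟩
    have := (image_segment ℝ (lineMap x (x + v)) l u).subset (mem_image_of_mem _ h₀)
    simpa [lineMap_apply_module', add_comm] using this
  rcases (mem_extremePoints_iff_forall_segment.1 hx).2 _ hl _ hu hseg with h | h <;>
    simp_all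

theorem mem_extremePoints_of_affineMap {A : Set E} {S : Set F} (f : F →ᵃ[ℝ] E)
    (hf : Function.Injective f) (hS : MapsTo f S A) {p : F} (hp : p ∈ S)
    (hfp : f p ∈ A.extremePoints ℝ) : p ∈ S.extremePoints ℝ :=
  ⟨hp, fun q hq r hr hpqr ↦
    hf (hfp.2 (hS hq) (hS hr) (image_openSegment ℝ f q r ▸ mem_image_of_mem f hpqr))⟩

end ExtremePoints

def stdTriangle : Set (ℝ × ℝ) := {p | 0 ≤ p.1 ∧ 0 ≤ p.2 ∧ p.1 + p.2 ≤ 1}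

theorem eq_zero_or_one_of_mem_extremePoints_stdTriangle {p : ℝ × ℝ}
    (hp : p ∈ stdTriangle.extremePoints ℝ) : (p.1 = 0 ∨ p.1 = 1) ∧ (p.2 = 0 ∨ p.2 = 1) := by
  obtain ⟨hσ, hτ, hστ⟩ := hp.1
  have line (v : ℝ × ℝ) (hv : v ≠ 0) (l u : ℝ) (hl : p + l • v ∈ stdTriangle)
      (hu : p + u • v ∈ stdTriangle) (hl₀ : l ≤ 0) (hu₀ : 0 ≤ u) : l = 0 ∨ u = 0 :=
    eq_zero_or_eq_zero_of_mem_extremePoints_of_add_smul_mem hp hv hl hu hl₀ hu₀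
  have hσ' := line (1, 0) (by simp) (-p.1) (1 - p.1 - p.2)
    (by refine ⟨?_, ?_, ?_⟩ <;> simp <;> linarith) (by refine ⟨?_, ?_, ?_⟩ <;> simp <;> linarith)
    (by linarith) (by linarith)
  have hτ' := line (0, 1) (by simp) (-p.2) (1 - p.1 - p.2)
    (by refine ⟨?_, ?_, ?_⟩ <;> simp <;> linarith) (by refine ⟨?_, ?_, ?_⟩ <;> simp <;> linarith)
    (by linarith) (by linarith)
  have hστ' := line (1, -1) (by simp) (-p.1) p.2
    (by refine ⟨?_, ?_, ?_⟩ <;> simp <;> linarith) (by refine ⟨?_, ?_, ?_⟩ <;> simp <;> linarith)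
    (by linarith) (by linarith)
  rcases hστ' with h | h
  · exact ⟨Or.inl (by linarith), hτ'.imp (fun _ ↦ by linarith) (fun _ ↦ by linarith)⟩
  · exact ⟨hσ'.imp (fun _ ↦ by linarith) (fun _ ↦ by linarith), Or.inl h⟩

theorem mem_stdTriangle_of_mem_polytopeBT {x : Fin 6 → ℝ} (hx : x ∈ polytopeBT) :
    (x 3, x 4) ∈ stdTriangle := by
  obtain ⟨hbox, -, -, hsb, -, -, htb⟩ := hx
  exact ⟨(hbox 3).1, (hbox 4).1, by dsimp only; linarith⟩

def IsFibreVertex (x : Fin 6 → ℝ) : Prop :=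
  (x 0 = 0 ∨ x 0 = 1 - x 3) ∧ (x 1 = x 3 ∨ x 1 = 1 - x 4) ∧
    (x 2 = x 3 + x 4 - x 5 ∨ x 2 = 1) ∧ (x 5 = 0 ∨ x 5 = x 3)

theorem isFibreVertex_of_mem_extremePoints {x : Fin 6 → ℝ}
    (hx : x ∈ polytopeBT.extremePoints ℝ) : IsFibreVertex x := by
  have hP := hx.1
  simp only [polytopeBT, mem_ofPred_eq, Fin.forall_fin_succ, Fin.isValue, Fin.succ_zero_eq_one,
    Fin.succ_one_eq_two, Fin.reduceSucc, IsEmpty.forall_iff, and_true, ge_iff_le,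
    tsub_le_iff_right] at hP
  obtain ⟨⟨⟨ha₀, ha₁⟩, ⟨hb₀, hb₁⟩, ⟨hc₀, hc₁⟩, ⟨hs₀, hs₁⟩, ⟨ht₀, ht₁⟩, hJ₀, hJ₁⟩,
    hJc, hJs, hsb, hsa, htc, htb⟩ := hP
  have line (v : Fin 6 → ℝ) (hv : v ≠ 0) (l u : ℝ) (hl : x + l • v ∈ polytopeBT)
      (hu : x + u • v ∈ polytopeBT) (hl₀ : l ≤ 0) (hu₀ : 0 ≤ u) : l = 0 ∨ u = 0 :=
    eq_zero_or_eq_zero_of_mem_extremePoints_of_add_smul_mem hx hv hl hu hl₀ hu₀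
  have hc : x 2 = x 3 + x 4 - x 5 ∨ x 2 = 1 :=
    (line (Pi.single 2 1) (by simp) (x 3 + x 4 - x 5 - x 2) (1 - x 2)
      (by simp [polytopeBT, Fin.forall_fin_succ]; and_intros <;> linarith)
      (by simp [polytopeBT, Fin.forall_fin_succ]; and_intros <;> linarith)
      (by linarith) (by linarith)).imp (fun _ ↦ by linarith) (fun _ ↦ by linarith)
  refine ⟨?_, ?_, hc, ?_⟩
  · exact (line (Pi.single 0 1) (by simp) (-x 0) (1 - x 3 - x 0)
      (by simp [polytopeBT, Fin.forall_fin_succ]; and_intros <;> linarith)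
      (by simp [polytopeBT, Fin.forall_fin_succ]; and_intros <;> linarith)
      (by linarith) (by linarith)).imp (fun _ ↦ by linarith) (fun _ ↦ by linarith)
  · exact (line (Pi.single 1 1) (by simp) (x 3 - x 1) (1 - x 4 - x 1)
      (by simp [polytopeBT, Fin.forall_fin_succ]; and_intros <;> linarith)
      (by simp [polytopeBT, Fin.forall_fin_succ]; and_intros <;> linarith)
      (by linarith) (by linarith)).imp (fun _ ↦ by linarith) (fun _ ↦ by linarith)
  · rcases hc with hc | hc
    -- on the edge `u_{t+1} + J = s_t + s_{t+1}` of the quadrilateral, `J` moves against `u_{t+1}`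
    · exact (line (Pi.single 5 1 - Pi.single 2 1) (fun h ↦ by simpa using congrFun h 5)
        (-x 5) (x 3 - x 5)
        (by simp [polytopeBT, Fin.forall_fin_succ]; and_intros <;> linarith)
        (by simp [polytopeBT, Fin.forall_fin_succ]; and_intros <;> linarith)
        (by linarith) (by linarith)).imp (fun _ ↦ by linarith) (fun _ ↦ by linarith)
    · exact (line (Pi.single 5 1) (by simp) (-x 5) (x 3 - x 5)
        (by simp [polytopeBT, Fin.forall_fin_succ]; and_intros <;> linarith)
        (by simp [polytopeBT, Fin.forall_fin_succ]; and_intros <;> linarith)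
        (by linarith) (by linarith)).imp (fun _ ↦ by linarith) (fun _ ↦ by linarith)

/-- The weights `ka, kb, kj, kc` are the positions of `u_{t-1}, u_t, J, u_{t+1}` on the segments
of the fibre over `(σ, τ)` from `0` to `1 - σ`, from `1 - τ` to `σ`, from `0` to `σ` and from
`σ + τ - J` to `1`; weights 0 and 1 give the vertices of the fibre. -/
def triangleSection (ka kb kc kj : ℝ) : ℝ × ℝ →ᵃ[ℝ] Fin 6 → ℝ :=
  ((LinearMap.fst ℝ ℝ ℝ).smulRight ![-ka, kb, (1 - kc) * (1 - kj), 1, 0, kj] +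
    (LinearMap.snd ℝ ℝ ℝ).smulRight ![0, kb - 1, 1 - kc, 0, 1, 0]).toAffineMap +
  AffineMap.const ℝ (ℝ × ℝ) ![ka, 1 - kb, kc, 0, 0, 0]

theorem triangleSection_apply (ka kb kc kj : ℝ) (p : ℝ × ℝ) :
    triangleSection ka kb kc kj p = ![ka * (1 - p.1), kb * p.1 + (1 - kb) * (1 - p.2),
      kc + (1 - kc) * (p.1 + p.2 - kj * p.1), p.1, p.2, kj * p.1] := by
  ext i
  fin_cases i <;> simp [triangleSection] <;> ring

theorem triangleSection_injective (ka kb kc kj : ℝ) :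
    Function.Injective (triangleSection ka kb kc kj) := by
  intro p q h
  simpa [triangleSection_apply, Prod.ext_iff] using And.intro (congrFun h 3) (congrFun h 4)

theorem mapsTo_triangleSection {ka kb kc kj : ℝ} (hka : ka ∈ Icc (0 : ℝ) 1)
    (hkb : kb ∈ Icc (0 : ℝ) 1) (hkc : kc ∈ Icc (0 : ℝ) 1) (hkj : kj ∈ Icc (0 : ℝ) 1) :
    MapsTo (triangleSection ka kb kc kj) stdTriangle polytopeBT := by
  rintro ⟨σ, τ⟩ ⟨hσ, hτ, hστ⟩
  obtain ⟨hka₀, hka₁⟩ := hka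
  obtain ⟨hkb₀, hkb₁⟩ := hkb
  obtain ⟨hkc₀, hkc₁⟩ := hkc
  obtain ⟨hkj₀, hkj₁⟩ := hkj
  dsimp only at hσ hτ hστ
  have hJ₀ : 0 ≤ kj * σ := mul_nonneg hkj₀ hσ
  have hJ₁ : kj * σ ≤ σ := mul_le_of_le_one_left hσ hkj₁
  simp only [triangleSection_apply, polytopeBT, mem_ofPred_eq, Fin.forall_fin_succ, Fin.isValue,
    Fin.succ_zero_eq_one, Fin.succ_one_eq_two, Fin.reduceSucc, IsEmpty.forall_iff, and_true,
    ge_iff_le, tsub_le_iff_right, Matrix.cons_val_zero, Matrix.cons_val_one, Matrix.cons_val]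
  and_intros <;> nlinarith [mul_nonneg hka₀ (by linarith : (0 : ℝ) ≤ 1 - σ),
    mul_nonneg (sub_nonneg.2 hka₁) (by linarith : (0 : ℝ) ≤ 1 - σ),
    mul_nonneg hkb₀ (by linarith : (0 : ℝ) ≤ 1 - σ - τ),
    mul_nonneg (sub_nonneg.2 hkb₁) (by linarith : (0 : ℝ) ≤ 1 - σ - τ),
    mul_nonneg hkc₀ (by linarith : (0 : ℝ) ≤ 1 - σ - τ + kj * σ),
    mul_nonneg (sub_nonneg.2 hkc₁) (by linarith : (0 : ℝ) ≤ σ + τ - kj * σ),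
    mul_nonneg (sub_nonneg.2 hkc₁) (by linarith : (0 : ℝ) ≤ σ - kj * σ),
    mul_nonneg hkc₀ (by linarith : (0 : ℝ) ≤ 1 - τ)]

theorem exists_mem_Icc_lineMap_eq {p q r : ℝ} (h : p = q ∨ p = r) :
    ∃ k ∈ Icc (0 : ℝ) 1, lineMap q r k = p := by
  rcases h with rfl | rfl
  exacts [⟨0, by simp, by simp⟩, ⟨1, by simp, by simp⟩]

theorem IsFibreVertex.exists_triangleSection_eq {x : Fin 6 → ℝ} (hx : IsFibreVertex x) :
    ∃ ka ∈ Icc (0 : ℝ) 1, ∃ kb ∈ Icc (0 : ℝ) 1, ∃ kc ∈ Icc (0 : ℝ) 1, ∃ kj ∈ Icc (0 : ℝ) 1,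
      triangleSection ka kb kc kj (x 3, x 4) = x := by
  obtain ⟨ha, hb, hc, hJ⟩ := hx
  obtain ⟨ka, hka, ha⟩ := exists_mem_Icc_lineMap_eq ha
  obtain ⟨kb, hkb, hb⟩ := exists_mem_Icc_lineMap_eq hb.symm
  obtain ⟨kc, hkc, hc⟩ := exists_mem_Icc_lineMap_eq hc
  obtain ⟨kj, hkj, hJ⟩ := exists_mem_Icc_lineMap_eq hJ
  simp only [lineMap_apply_module, smul_eq_mul] at ha hb hc hJ
  refine ⟨ka, hka, kb, hkb, kc, hkc, kj, hkj, ?_⟩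
  ext i
  fin_cases i <;> simp only [Fin.isValue, Fin.zero_eta, Fin.mk_one, Fin.reduceFinMk,
    triangleSection_apply, Matrix.cons_val_zero, Matrix.cons_val_one, Matrix.cons_val]
  · linear_combination ha
  · linear_combination hb
  · linear_combination hc - (1 - kc) * hJ
  · linear_combination hJ

theorem IsFibreVertex.eq_zero_or_one {x : Fin 6 → ℝ} (hx : IsFibreVertex x)
    (hT : (x 3, x 4) ∈ stdTriangle) (hs : x 3 = 0 ∨ x 3 = 1) (ht : x 4 = 0 ∨ x 4 = 1)
    (i : Fin 6) : x i = 0 ∨ x i = 1 := by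
  obtain ⟨ha, hb, hc, hJ⟩ := hx
  fin_cases i
  · rcases ha with h | h <;> rcases hs with hs | hs <;> simp [h, hs]
  · rcases hb with h | h <;> rcases hs with hs | hs <;> rcases ht with ht | ht <;> simp [h, hs, ht]
  · rcases hc with h | h
    · rcases hJ with hJ | hJ
      · rcases hs with hs | hs
        · simpa [h, hJ, hs] using ht
        · right; simp only [Fin.reduceFinMk, Fin.isValue]; linarith [hT.2.1, hT.2.2]
      · simpa [h, hJ] using ht
    · exact Or.inr h
  · exact hs
  · exact ht
  · rcases hJ with h | h <;> simp [h, hs]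

/-- Every vertex (extreme point) of the polytope `B^T` has all
coordinates in {0,1}, i.e. `B^T` is an integral polytope. -/
theorem polytopeBT_integral :
    ∀ x ∈ Set.extremePoints ℝ polytopeBT, ∀ i : Fin 6, x i = 0 ∨ x i = 1 := by
  intro x hx
  have hfib := isFibreVertex_of_mem_extremePoints hx
  have hT := mem_stdTriangle_of_mem_polytopeBT hx.1
  obtain ⟨ka, hka, kb, hkb, kc, hkc, kj, hkj, hsec⟩ := hfib.exists_triangleSection_eq
  have hvertex : (x 3, x 4) ∈ stdTriangle.extremePoints ℝ :=
    mem_extremePoints_of_affineMap _ (triangleSection_injective ka kb kc kj)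
      (mapsTo_triangleSection hka hkb hkc hkj) hT (by rwa [hsec])
  obtain ⟨hs, ht⟩ := eq_zero_or_one_of_mem_extremePoints_stdTriangle hvertex
  exact hfib.eq_zero_or_one hT hs ht
end

section
/- Let P̃_start, P̃_shut ∈ [0,1] and suppose J = min(s, d') for binary s, d', u with s ≤ u, d' ≤ u. Then the inequality P̃ ≤ u − s(1 − P̃_start) − d'(1 − P̃_shut) + J(1 − max(P̃_start, P̃_shut)) implies both P̃ ≤ u − s(1 − P̃_start) − d'·max(P̃_start − P̃_shut, 0) and P̃ ≤ u − d'(1 − P̃_shut) − s·max(P̃_shut − P̃_start, 0), for all real P̃ and all binary assignments; moreover for relaxed (fractional) variables in [0,1] with J ≤ s and J ≤ d', the first inequality together with J ≤ d' implies the second two pointwise. -/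
/-- The high-dimensional generation upper bound (46), together with the
linking constraints J ≤ s and J ≤ d', implies (pointwise, even for fractional
variables in [0,1]) the facet inequalities (14) and (15) of
Gentile–Morales-España–Ramos. -/
theorem hd_bound_implies_GMR_facets (Pstart Pshut : ℝ)
    (hPs : 0 ≤ Pstart ∧ Pstart ≤ 1) (hPsh : 0 ≤ Pshut ∧ Pshut ≤ 1)
    (u s d' J P : ℝ)
    (hu : 0 ≤ u ∧ u ≤ 1) (hs : 0 ≤ s ∧ s ≤ 1) (hd : 0 ≤ d' ∧ d' ≤ 1)
    (hJ0 : 0 ≤ J) (hJs : J ≤ s) (hJd : J ≤ d')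
    (h46 : P ≤ u - s * (1 - Pstart) - d' * (1 - Pshut) + J * (1 - max Pstart Pshut)) :
    P ≤ u - s * (1 - Pstart) - d' * max (Pstart - Pshut) 0 ∧
    P ≤ u - d' * (1 - Pshut) - s * max (Pshut - Pstart) 0 := by
  rcases le_total Pstart Pshut with h | h
  · rw [max_eq_right h] at h46
    rw [max_eq_right (by linarith : Pstart - Pshut ≤ 0),
      max_eq_left (by linarith : (0:ℝ) ≤ Pshut - Pstart)]
    constructor <;> nlinarith [hPs.2, hPsh.2, hPs.1, hPsh.1]
  · rw [max_eq_left h] at h46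
    rw [max_eq_left (by linarith : (0:ℝ) ≤ Pstart - Pshut),
      max_eq_right (by linarith : Pshut - Pstart ≤ 0)]
    constructor <;> nlinarith [hPs.2, hPsh.2, hPs.1, hPsh.1]
end

section
/- Let P̃_shut, P̃_down ∈ [0,1] with P̃_shut + P̃_down ≤ 1. For all binary u_{t−1}, d_t, d_{t+1} with d_t + d_{t+1} ≤ 1 and d_t ≤ u_{t−1}, the inequality P̃_{t−1} ≤ u_{t−1} + d_t(P̃_shut − 1) + d_{t+1}(P̃_down + P̃_shut − 1) implies P̃_{t−1} ≤ u_{t−1} − d_t(1 − P̃_shut); and if P̃_shut + P̃_down < 1, there exists a fractional point in [0,1]^3 × ℝ satisfying the second inequality but violating the first. Hence inequality (50-restricted) is strictly tighter than (52) when P̃_shut + P̃_down < 1. -/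
/-- With P̃shut + P̃down ≤ 1, inequality (50)-restricted implies (52)
for all binary states, and when P̃shut + P̃down < 1 there is a point of the
continuous relaxation feasible for (52) but cut off by (50)-restricted; hence
(50)-restricted is strictly tighter than (52). -/
theorem ineq50_strictly_tighter_than_52 (Pshut Pdown : ℝ)
    (hPsh : 0 ≤ Pshut ∧ Pshut ≤ 1) (hPd : 0 ≤ Pdown ∧ Pdown ≤ 1)
    (hsum : Pshut + Pdown ≤ 1) :
    (∀ u d d1 P : ℝ, (u = 0 ∨ u = 1) → (d = 0 ∨ d = 1) → (d1 = 0 ∨ d1 = 1) →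
      d + d1 ≤ 1 → d ≤ u →
      P ≤ u + d * (Pshut - 1) + d1 * (Pdown + Pshut - 1) →
      P ≤ u - d * (1 - Pshut)) ∧
    (Pshut + Pdown < 1 →
      ∃ u d d1 P : ℝ, (0 ≤ u ∧ u ≤ 1) ∧ (0 ≤ d ∧ d ≤ 1) ∧ (0 ≤ d1 ∧ d1 ≤ 1) ∧
        d + d1 ≤ 1 ∧ d ≤ u ∧
        P ≤ u - d * (1 - Pshut) ∧
        ¬ P ≤ u + d * (Pshut - 1) + d1 * (Pdown + Pshut - 1)) := by
  constructor
  · rintro u d d1 P hu hd (rfl | rfl) _ _ h6 <;> nlinarith [hPsh.1, hPsh.2, hPd.1, hPd.2]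
  · intro hlt
    exact ⟨1, 0, 1, 1, ⟨le_refl 0 |>.trans zero_le_one, le_refl 1⟩, ⟨le_refl 0, zero_le_one⟩,
      ⟨zero_le_one, le_refl 1⟩, by norm_num, by norm_num, by norm_num, by norm_num; linarith⟩
end

section
/- Let P̃_start, P̃_up ∈ [0,1] with P̃_start + P̃_up ≤ 1. For all variables u_{t+1}, s_t, s_{t+1} ∈ [0,1] with s_t + s_{t+1} ≤ 1 and s_{t+1} ≤ u_{t+1}, the inequality P̃_{t+1} ≤ u_{t+1} + s_t(P̃_start + P̃_up − 1) + s_{t+1}(P̃_start − 1) implies P̃_{t+1} ≤ u_{t+1} − s_{t+1}(1 − P̃_start); and if P̃_start + P̃_up < 1, the implication is strict (there is a fractional point feasible for the latter but not the former). -/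
/-- With P̃start + P̃up ≤ 1, inequality (51)-restricted implies (53)
for all (possibly fractional) variables in [0,1] with s_t + s_{t+1} ≤ 1 and
s_{t+1} ≤ u_{t+1}; and when P̃start + P̃up < 1 the implication is strict: some
fractional point is feasible for (53) but violates (51)-restricted. -/
theorem ineq51_strictly_tighter_than_53 (Pstart Pup : ℝ)
    (hPs : 0 ≤ Pstart ∧ Pstart ≤ 1) (hPu : 0 ≤ Pup ∧ Pup ≤ 1)
    (hsum : Pstart + Pup ≤ 1) :
    (∀ u1 st st1 P : ℝ, (0 ≤ u1 ∧ u1 ≤ 1) → (0 ≤ st ∧ st ≤ 1) → (0 ≤ st1 ∧ st1 ≤ 1) →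
      st + st1 ≤ 1 → st1 ≤ u1 →
      P ≤ u1 + st * (Pstart + Pup - 1) + st1 * (Pstart - 1) →
      P ≤ u1 - st1 * (1 - Pstart)) ∧
    (Pstart + Pup < 1 →
      ∃ u1 st st1 P : ℝ, (0 ≤ u1 ∧ u1 ≤ 1) ∧ (0 ≤ st ∧ st ≤ 1) ∧ (0 ≤ st1 ∧ st1 ≤ 1) ∧
        st + st1 ≤ 1 ∧ st1 ≤ u1 ∧
        P ≤ u1 - st1 * (1 - Pstart) ∧
        ¬ P ≤ u1 + st * (Pstart + Pup - 1) + st1 * (Pstart - 1)) := by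
  constructor
  · intro u1 st st1 P hu hst hst1 hss hsu h
    nlinarith [mul_nonneg hst.1 (sub_nonneg.2 hsum), mul_nonneg hst.1 hPs.1]
  · intro hlt
    exact ⟨1, 1, 0, 1, ⟨le_refl 0 |>.trans zero_le_one, le_refl 1⟩, ⟨zero_le_one, le_refl 1⟩,
      ⟨le_refl 0, zero_le_one⟩, by norm_num, zero_le_one, by norm_num, by nlinarith⟩
end

section
/- Let P̃_up, P̃_start, P̃_shut ∈ [0,1]. For binary variables u_t, s_t, d_{t+1} with s_t ≤ u_t, d_{t+1} ≤ u_t, s_t + d_{t+1} ≤ u_t + 1, and assuming P̃_up > P̃_shut, the ramp-up inequality P̃_t − P̃_{t−1} ≤ u_t·P̃_up + s_t(P̃_start − P̃_up) − d_{t+1}·(P̃_up − P̃_shut) (i.e., (65) with [P̃_up − P̃_shut]^+ = P̃_up − P̃_shut) implies the inequality P̃_t − P̃_{t−1} ≤ u_t·P̃_up + s_t(P̃_start − P̃_up) − d_{t+1}(P̃_up − P̃_shut + P̃_min_term) of Ostrowski et al. after renormalization, where the implication holds pointwise on the relaxed feasible region. -/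
/-- (36)&(58) ⟹ (20). In normalized variables, the ramp-up inequality (65)
(with minimum up time ≥ 2, so J vanishes, and P̃up > P̃shut so [P̃up − P̃shut]⁺ = P̃up − P̃shut)
implies, after renormalizing back to the original variables, the three-period ramp-up
inequality (20) of Ostrowski et al., pointwise on the relaxed feasible region. -/
theorem ineq65_implies_ineq20 (Pmin Pmax Pup Pstart Pshut : ℝ) (hP : Pmin < Pmax)
    (Pt Ptm1 : ℝ) (ut utm1 st dt dt1 : ℝ)
    (hut : 0 ≤ ut ∧ ut ≤ 1) (hutm1 : 0 ≤ utm1 ∧ utm1 ≤ 1)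
    (hst : 0 ≤ st ∧ st ≤ 1) (hdt : 0 ≤ dt ∧ dt ≤ 1) (hdt1 : 0 ≤ dt1 ∧ dt1 ≤ 1)
    (hlogic : st - dt = ut - utm1)
    (hstu : st ≤ ut) (hdt1u : dt1 ≤ ut) (hsd : st + dt1 ≤ ut + 1)
    (hups : Pup / (Pmax - Pmin) > (Pshut - Pmin) / (Pmax - Pmin))
    (h65 : (Pt - ut * Pmin) / (Pmax - Pmin) - (Ptm1 - utm1 * Pmin) / (Pmax - Pmin) ≤
      ut * (Pup / (Pmax - Pmin)) +
        st * ((Pstart - Pmin) / (Pmax - Pmin) - Pup / (Pmax - Pmin)) -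
        dt1 * (Pup / (Pmax - Pmin) - (Pshut - Pmin) / (Pmax - Pmin))) :
    Pt - Ptm1 ≤ ut * Pup - dt * Pmin - dt1 * (Pup - Pshut + Pmin) +
      st * (Pstart - Pup) := by
  have hd : (0:ℝ) < Pmax - Pmin := by linarith
  have hne : Pmax - Pmin ≠ 0 := ne_of_gt hd
  have h := mul_le_mul_of_nonneg_right h65 hd.le
  field_simp at h
  have h2 : (st - dt) * Pmin = (ut - utm1) * Pmin := by rw [hlogic]
  linarith [h, h2]
end

section
/- Suppose P̃_up, P̃_start, P̃_shut ∈ [0,1] satisfy P̃_up < P̃_shut. Then there exists a binary state (namely u_{t−1} = u_t = 1, u_{t+1} = 0, i.e., d_{t+1} = 1, s_t = 0) at which the inequality P̃_t − P̃_{t−1} ≤ u_t·P̃_up + s_t(P̃_start − P̃_up) − d_{t+1}·[P̃_up − P̃_shut]^+ allows P̃_t − P̃_{t−1} up to P̃_up, which equals the true combinatorial upper bound min(P̃_up, P̃_shut) = P̃_up, while the corresponding bound from inequality (20) (after normalization) is strictly larger; hence (58/65) is strictly tighter than (20) when P̃_up < P̃_shut. -/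
/-- When P̃up < P̃shut, at the binary state u_{t−1} = u_t = 1, u_{t+1} = 0
(so d_{t+1} = 1, s_t = 0), the bound from (58/65) equals the true combinatorial upper bound
min(P̃up, P̃shut) = P̃up, while the bound from (20) (in normalized form) is strictly larger;
hence (58/65) is strictly tighter than (20). -/
theorem ineq65_strictly_tighter_than_20 (Pup Pstart Pshut : ℝ)
    (hPu : 0 ≤ Pup ∧ Pup ≤ 1) (hPs : 0 ≤ Pstart ∧ Pstart ≤ 1)
    (hPsh : 0 ≤ Pshut ∧ Pshut ≤ 1) (hlt : Pup < Pshut) :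
    ∃ ut st dt1 : ℝ, ut = 1 ∧ st = 0 ∧ dt1 = 1 ∧
      (ut * Pup + st * (Pstart - Pup) - dt1 * max (Pup - Pshut) 0
          = min Pup Pshut) ∧
      (min Pup Pshut = Pup) ∧
      (ut * Pup + st * (Pstart - Pup) - dt1 * max (Pup - Pshut) 0
          < ut * Pup + st * (Pstart - Pup) - dt1 * (Pup - Pshut)) := by
  refine ⟨1, 0, 1, rfl, rfl, rfl, ?_, ?_, ?_⟩
  · rw [max_eq_right (by linarith), min_eq_left hlt.le]; ring
  · exact min_eq_left hlt.le
  · rw [max_eq_right (by linarith)]; nlinarith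
end

section
/- Let P̃_up, P̃_start, P̃_shut ∈ [0,1] and define q = [P̃_up − P̃_shut]^+ − [P̃_start − P̃_shut]^+. Suppose q ≥ 0. Then for binary variables s, d', u, J with J ≤ s, J ≤ d', J ≥ s + d' − u (so J = min(s, d') on binaries with s, d' ≤ u), the single inequality x ≤ J·q + u·P̃_up + s(P̃_start − P̃_up) − d'·[P̃_up − P̃_shut]^+ holds for all real x if and only if the pair of inequalities x ≤ s(min(P̃_start, P̃_shut) − min(P̃_up, P̃_shut)) + u·P̃_up − d'·[P̃_up − P̃_shut]^+ and x ≤ s(P̃_start − P̃_up) + u·P̃_up − d'·[P̃_start − P̃_shut]^+ both hold, for every binary assignment of (s, d', u). -/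
/-- Equivalence of the high-dimensional ramp-up constraint (58) with the
projected pair (66)–(67) when q = [P̃up − P̃shut]⁺ − [P̃start − P̃shut]⁺ ≥ 0, using
J = min(s, d') = s·d' on binaries. -/
theorem ineq58_iff_66_67 (Pup Pstart Pshut : ℝ)
    (hPu : 0 ≤ Pup ∧ Pup ≤ 1) (hPs : 0 ≤ Pstart ∧ Pstart ≤ 1)
    (hPsh : 0 ≤ Pshut ∧ Pshut ≤ 1)
    (hq : 0 ≤ max (Pup - Pshut) 0 - max (Pstart - Pshut) 0) :
    ∀ s d' u J : ℝ, (s = 0 ∨ s = 1) → (d' = 0 ∨ d' = 1) → (u = 0 ∨ u = 1) →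
      s ≤ u → d' ≤ u → J = s * d' →
      ∀ x : ℝ,
        (x ≤ J * (max (Pup - Pshut) 0 - max (Pstart - Pshut) 0) + u * Pup +
            s * (Pstart - Pup) - d' * max (Pup - Pshut) 0) ↔
        ((x ≤ s * (min Pstart Pshut - min Pup Pshut) + u * Pup -
            d' * max (Pup - Pshut) 0) ∧
         (x ≤ s * (Pstart - Pup) + u * Pup - d' * max (Pstart - Pshut) 0)) := by
  intro s d' u J hs hd hu hsu hdu hJ x
  subst hJ
  rcases hs with rfl|rfl <;> rcases hd with rfl|rfl <;> rcases hu with rfl|rfl <;>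
    rcases le_total Pup Pshut with h1|h1 <;> rcases le_total Pstart Pshut with h2|h2 <;>
    simp_all [max_def, min_def] <;> (try constructor) <;> intro h <;>
    first | (obtain ⟨ha, hb⟩ := h; linarith) | (exact ⟨by linarith, by linarith⟩) | linarith
end

section
/- Let P̃_up, P̃_start, P̃_shut ∈ [0,1] and define q = [P̃_up − P̃_shut]^+ − [P̃_start − P̃_shut]^+. Suppose q < 0. Then for binary variables s, d', u with s ≤ u, d' ≤ u and J = max(s + d' − u, 0), the inequality x ≤ J·q + u·P̃_up + s(P̃_start − P̃_up) − d'·[P̃_up − P̃_shut]^+ is equivalent (for all binary assignments) to the pair: x ≤ u·P̃_up + s(P̃_start − P̃_up) − d'·[P̃_up − P̃_shut]^+ and x ≤ −d'·[P̃_start − P̃_shut]^+ + u(min(P̃_up, P̃_shut) + [P̃_start − P̃_shut]^+) + s(min(P̃_start, P̃_shut) − min(P̃_up, P̃_shut)). -/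
/-- Equivalence of the high-dimensional ramp-up constraint (58) with the
projected pair (68)&(65) when q = [P̃up − P̃shut]⁺ − [P̃start − P̃shut]⁺ < 0, using
J = max(s + d' − u, 0). -/
theorem ineq58_iff_68_65 (Pup Pstart Pshut : ℝ)
    (hPu : 0 ≤ Pup ∧ Pup ≤ 1) (hPs : 0 ≤ Pstart ∧ Pstart ≤ 1)
    (hPsh : 0 ≤ Pshut ∧ Pshut ≤ 1)
    (hq : max (Pup - Pshut) 0 - max (Pstart - Pshut) 0 < 0) :
    ∀ s d' u : ℝ, (s = 0 ∨ s = 1) → (d' = 0 ∨ d' = 1) → (u = 0 ∨ u = 1) →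
      s ≤ u → d' ≤ u →
      ∀ x : ℝ,
        (x ≤ max (s + d' - u) 0 * (max (Pup - Pshut) 0 - max (Pstart - Pshut) 0) +
            u * Pup + s * (Pstart - Pup) - d' * max (Pup - Pshut) 0) ↔
        ((x ≤ u * Pup + s * (Pstart - Pup) - d' * max (Pup - Pshut) 0) ∧
         (x ≤ - d' * max (Pstart - Pshut) 0 +
            u * (min Pup Pshut + max (Pstart - Pshut) 0) +
            s * (min Pstart Pshut - min Pup Pshut))) := by
  have hB : 0 < Pstart - Pshut := by
    by_contra h
    push_neg at h
    rw [max_eq_right h] at hq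
    have := le_max_right (Pup - Pshut) (0:ℝ)
    linarith
  have hBmax : max (Pstart - Pshut) 0 = Pstart - Pshut := max_eq_left hB.le
  have hmin1 : min Pstart Pshut = Pshut := min_eq_right (by linarith)
  have hq' : Pup < Pstart := by
    rw [hBmax] at hq
    have := le_max_left (Pup - Pshut) (0:ℝ)
    linarith
  rintro s d' u (rfl|rfl) (rfl|rfl) (rfl|rfl) hsu hdu x <;>
    rcases le_total Pshut Pup with h1 | h1 <;>
    rw [hBmax, hmin1] at * <;>
    (first
      | rw [max_eq_left (by linarith : (0:ℝ) ≤ Pup - Pshut), min_eq_right h1] at *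
      | rw [max_eq_right (by linarith : Pup - Pshut ≤ (0:ℝ)), min_eq_left h1] at *) <;>
    norm_num <;>
    (try constructor) <;> (try intro h) <;> (try constructor) <;> (try rintro ⟨h, h2⟩) <;>
    linarith
end

section
/- With the polytope B^R_t and integer set B^I_t as in Theorem 1 (minimum up time 1 case), conv(B^I_t) = B^R_t; that is, the continuous relaxation defined by the logical equalities, the minimum up/down constraints, the linking constraints on J, and inequalities (46), (50), (51) is an integral polyhedron in the binary coordinates, forming an ideal (convex-hull) formulation for the three-period single-unit states with generation limits. -/
set_option maxHeartbeats 4000000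

/-- The relaxed polytope `B^R_t` of Theorem 1, in variables
x = (P̃_{t-1}, P̃_t, P̃_{t+1}, u_{t-1}, u_t, u_{t+1}, s_t, s_{t+1}, d_t, d_{t+1}, J)
indexed by 0,…,10, for a unit with minimum up time and down time 1. -/
def BRt (Ps Psh Pu Pd : ℝ) : Set (Fin 11 → ℝ) :=
  {x | 0 ≤ x 0 ∧ 0 ≤ x 1 ∧ 0 ≤ x 2 ∧
    (∀ i : Fin 11, 3 ≤ (i : ℕ) → 0 ≤ x i ∧ x i ≤ 1) ∧
    x 6 - x 8 = x 4 - x 3 ∧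
    x 7 - x 9 = x 5 - x 4 ∧
    x 6 ≤ x 4 ∧ x 7 ≤ x 5 ∧ x 8 ≤ 1 - x 4 ∧ x 9 ≤ 1 - x 5 ∧
    x 10 ≥ x 6 + x 9 - x 4 ∧ x 10 ≤ x 6 ∧ x 10 ≤ x 9 ∧
    x 1 ≤ x 4 - x 6 * (1 - Ps) - x 9 * (1 - Psh) + x 10 * (1 - max Ps Psh) ∧
    x 0 ≤ x 10 * (1 - Pd - Psh) + x 3 + x 8 * (Psh - 1) + x 9 * (Pd + Psh - 1) ∧
    x 2 ≤ x 10 * (1 - Ps - Pu) + x 5 + x 6 * (Ps + Pu - 1) + x 7 * (Ps - 1)}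

/-- The integer points of `B^R_t`: the eight status coordinates are binary. -/
def BIt (Ps Psh Pu Pd : ℝ) : Set (Fin 11 → ℝ) :=
  {x | x ∈ BRt Ps Psh Pu Pd ∧ ∀ i : Fin 11, 3 ≤ (i : ℕ) → (x i = 0 ∨ x i = 1)}

lemma exists_theta' {p B : ℝ} (h0 : 0 ≤ p) (h : p ≤ B) : ∃ θ, 0 ≤ θ ∧ θ ≤ 1 ∧ θ * B = p := by
  rcases eq_or_lt_of_le (h0.trans h) with hB | hB
  · exact ⟨0, le_refl 0, zero_le_one, by rw [zero_mul]; linarith⟩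
  · exact ⟨p / B, div_nonneg h0 hB.le, (div_le_one hB).mpr h, div_mul_cancel₀ _ hB.ne'⟩

lemma f11_0 : (0 : Fin 11) = ⟨0, by norm_num⟩ := rfl
lemma f11_1 : (1 : Fin 11) = ⟨1, by norm_num⟩ := rfl
lemma f11_2 : (2 : Fin 11) = ⟨2, by norm_num⟩ := rfl
lemma f11_3 : (3 : Fin 11) = ⟨3, by norm_num⟩ := rfl
lemma f11_4 : (4 : Fin 11) = ⟨4, by norm_num⟩ := rfl
lemma f11_5 : (5 : Fin 11) = ⟨5, by norm_num⟩ := rfl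
lemma f11_6 : (6 : Fin 11) = ⟨6, by norm_num⟩ := rfl
lemma f11_7 : (7 : Fin 11) = ⟨7, by norm_num⟩ := rfl
lemma f11_8 : (8 : Fin 11) = ⟨8, by norm_num⟩ := rfl
lemma f11_9 : (9 : Fin 11) = ⟨9, by norm_num⟩ := rfl
lemma f11_10 : (10 : Fin 11) = ⟨10, by norm_num⟩ := rfl
lemma f8_0 : (0 : Fin 8) = ⟨0, by norm_num⟩ := rfl
lemma f8_1 : (1 : Fin 8) = ⟨1, by norm_num⟩ := rfl
lemma f8_2 : (2 : Fin 8) = ⟨2, by norm_num⟩ := rfl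
lemma f8_3 : (3 : Fin 8) = ⟨3, by norm_num⟩ := rfl
lemma f8_4 : (4 : Fin 8) = ⟨4, by norm_num⟩ := rfl
lemma f8_5 : (5 : Fin 8) = ⟨5, by norm_num⟩ := rfl
lemma f8_6 : (6 : Fin 8) = ⟨6, by norm_num⟩ := rfl
lemma f8_7 : (7 : Fin 8) = ⟨7, by norm_num⟩ := rfl

lemma convex_BRt (Ps Psh Pu Pd : ℝ) : Convex ℝ (BRt Ps Psh Pu Pd) := by
  intro x hx y hy a b ha hb hab
  obtain ⟨hx0, hx1, hx2, hxbox, hxe1, hxe2, hxi1, hxi2, hxi3, hxi4, hxJ1, hxJ2, hxJ3, hxg1, hxg0, hxg2⟩ := hx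
  obtain ⟨hy0, hy1, hy2, hybox, hye1, hye2, hyi1, hyi2, hyi3, hyi4, hyJ1, hyJ2, hyJ3, hyg1, hyg0, hyg2⟩ := hy
  simp only [BRt, Set.mem_setOf_eq, Pi.add_apply, Pi.smul_apply, smul_eq_mul]
  refine ⟨add_nonneg (mul_nonneg ha hx0) (mul_nonneg hb hy0),
    add_nonneg (mul_nonneg ha hx1) (mul_nonneg hb hy1),
    add_nonneg (mul_nonneg ha hx2) (mul_nonneg hb hy2), ?_,
    by linarith [mul_le_mul_of_nonneg_left hxe1.le ha, mul_le_mul_of_nonneg_left hxe1.ge ha,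
      mul_le_mul_of_nonneg_left hye1.le hb, mul_le_mul_of_nonneg_left hye1.ge hb],
    by linarith [mul_le_mul_of_nonneg_left hxe2.le ha, mul_le_mul_of_nonneg_left hxe2.ge ha,
      mul_le_mul_of_nonneg_left hye2.le hb, mul_le_mul_of_nonneg_left hye2.ge hb],
    by linarith [mul_le_mul_of_nonneg_left hxi1 ha, mul_le_mul_of_nonneg_left hyi1 hb],
    by linarith [mul_le_mul_of_nonneg_left hxi2 ha, mul_le_mul_of_nonneg_left hyi2 hb],
    by linarith [mul_le_mul_of_nonneg_left hxi3 ha, mul_le_mul_of_nonneg_left hyi3 hb],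
    by linarith [mul_le_mul_of_nonneg_left hxi4 ha, mul_le_mul_of_nonneg_left hyi4 hb],
    by linarith [mul_le_mul_of_nonneg_left hxJ1 ha, mul_le_mul_of_nonneg_left hyJ1 hb],
    by linarith [mul_le_mul_of_nonneg_left hxJ2 ha, mul_le_mul_of_nonneg_left hyJ2 hb],
    by linarith [mul_le_mul_of_nonneg_left hxJ3 ha, mul_le_mul_of_nonneg_left hyJ3 hb],
    by linarith [mul_le_mul_of_nonneg_left hxg1 ha, mul_le_mul_of_nonneg_left hyg1 hb],
    by linarith [mul_le_mul_of_nonneg_left hxg0 ha, mul_le_mul_of_nonneg_left hyg0 hb],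
    by linarith [mul_le_mul_of_nonneg_left hxg2 ha, mul_le_mul_of_nonneg_left hyg2 hb]⟩
  intro i hi
  obtain ⟨hxl, hxu⟩ := hxbox i hi
  obtain ⟨hyl, hyu⟩ := hybox i hi
  exact ⟨add_nonneg (mul_nonneg ha hxl) (mul_nonneg hb hyl),
    by linarith [mul_le_mul_of_nonneg_left hxu ha, mul_le_mul_of_nonneg_left hyu hb]⟩

/-- conv(B^I_t) = B^R_t, i.e. the relaxation is an ideal (convex hull)
formulation of the three-period single-unit states with generation limits. -/
theorem convexHull_BIt_eq_BRt (Ps Psh Pu Pd : ℝ)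
    (hPs : 0 < Ps ∧ Ps < 1) (hPsh : 0 < Psh ∧ Psh < 1)
    (hPu : 0 < Pu ∧ Pu < 1) (hPd : 0 < Pd ∧ Pd < 1)
    (hsu : Ps + Pu < 1) (hsd : Psh + Pd < 1) :
    convexHull ℝ (BIt Ps Psh Pu Pd) = BRt Ps Psh Pu Pd := by
  apply Set.Subset.antisymm
  · exact convexHull_min (fun x hx => hx.1) (convex_BRt Ps Psh Pu Pd)
  · obtain ⟨hPs0, hPs1⟩ := hPs
    obtain ⟨hPsh0, hPsh1⟩ := hPsh
    obtain ⟨hPu0, hPu1⟩ := hPu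
    obtain ⟨hPd0, hPd1⟩ := hPd
    have hMps : 0 ≤ Ps + Psh - max Ps Psh := by
      rcases max_cases Ps Psh with ⟨h, _⟩ | ⟨h, _⟩ <;> rw [h] <;> linarith
    have hMl : Ps ≤ max Ps Psh := le_max_left _ _
    have hMr : Psh ≤ max Ps Psh := le_max_right _ _
    intro x hx
    obtain ⟨hx0, hx1, hx2, hxbox, hxe1, hxe2, hxi1, hxi2, hxi3, hxi4, hxJ1, hxJ2, hxJ3, hxg1, hxg0, hxg2⟩ := hx
    obtain ⟨h3l, h3u⟩ := hxbox 3 (by decide)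
    obtain ⟨h4l, h4u⟩ := hxbox 4 (by decide)
    obtain ⟨h5l, h5u⟩ := hxbox 5 (by decide)
    obtain ⟨h6l, h6u⟩ := hxbox 6 (by decide)
    obtain ⟨h7l, h7u⟩ := hxbox 7 (by decide)
    obtain ⟨h8l, h8u⟩ := hxbox 8 (by decide)
    obtain ⟨h9l, h9u⟩ := hxbox 9 (by decide)
    obtain ⟨h10l, h10u⟩ := hxbox 10 (by decide)
    obtain ⟨θ0, hθ00, hθ01, hθ0B⟩ := exists_theta' hx0 hxg0
    obtain ⟨θ1, hθ10, hθ11, hθ1B⟩ := exists_theta' hx1 hxg1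
    obtain ⟨θ2, hθ20, hθ21, hθ2B⟩ := exists_theta' hx2 hxg2
    set t0 : ℝ := max 0 (x 4 + x 7 + x 8 - 1) with ht0def
    have ht00 : 0 ≤ t0 := le_max_left _ _
    have ht01 : x 4 + x 7 + x 8 - 1 ≤ t0 := le_max_right _ _
    have ht7 : t0 ≤ x 7 := max_le h7l (by linarith)
    have hx7u : x 7 ≤ 1 - x 4 := by linarith
    have ht8 : t0 ≤ x 8 := max_le h8l (by linarith)
    set w : Fin 8 → ℝ := ![1 - x 4 - x 7 - x 8 + t0, x 7 - t0, x 10, x 6 - x 10,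
      x 8 - t0, t0, x 9 - x 10, x 4 - x 6 - x 9 + x 10] with hwdef
    set v : Fin 8 → Fin 11 → ℝ := ![
      ![0, 0, 0, 0, 0, 0, 0, 0, 0, 0, 0],
      ![0, 0, θ2 * Ps, 0, 0, 1, 0, 1, 0, 0, 0],
      ![0, θ1 * (Ps + Psh - max Ps Psh), 0, 0, 1, 0, 1, 0, 0, 1, 1],
      ![0, θ1 * Ps, θ2 * (Ps + Pu), 0, 1, 1, 1, 0, 0, 0, 0],
      ![θ0 * Psh, 0, 0, 1, 0, 0, 0, 0, 1, 0, 0],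
      ![θ0 * Psh, 0, θ2 * Ps, 1, 0, 1, 0, 1, 1, 0, 0],
      ![θ0 * (Pd + Psh), θ1 * Psh, 0, 1, 1, 0, 0, 0, 0, 1, 0],
      ![θ0, θ1, θ2, 1, 1, 1, 0, 0, 0, 0, 0]] with hvdef
    have hw0 : ∀ i : Fin 8, 0 ≤ w i := by
      intro i
      fin_cases i <;>
        simp only [hwdef, f8_0, f8_1, f8_2, f8_3, f8_4, f8_5, f8_6, f8_7,
          Matrix.cons_val_zero', Matrix.cons_val_succ', Matrix.cons_val_zero] <;>
        linarith
    have hwsum : ∑ i : Fin 8, w i = 1 := by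
      simp only [hwdef, Fin.sum_univ_eight, f8_0, f8_1, f8_2, f8_3, f8_4, f8_5, f8_6, f8_7,
        Matrix.cons_val_zero', Matrix.cons_val_succ', Matrix.cons_val_zero]
      ring
    have hvmem : ∀ i : Fin 8, v i ∈ BIt Ps Psh Pu Pd := by
      intro i
      fin_cases i <;>
        simp only [hvdef, f8_0, f8_1, f8_2, f8_3, f8_4, f8_5, f8_6, f8_7,
          Matrix.cons_val_zero', Matrix.cons_val_succ', Matrix.cons_val_zero] <;>
        refine ⟨⟨?_, ?_, ?_, ?_, ?_, ?_, ?_, ?_, ?_, ?_, ?_, ?_, ?_, ?_, ?_, ?_⟩, ?_⟩ <;>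
        (try simp only [f11_0, f11_1, f11_2, f11_3, f11_4, f11_5, f11_6, f11_7, f11_8, f11_9,
          f11_10, Matrix.cons_val_zero', Matrix.cons_val_succ', Matrix.cons_val_zero]) <;>
        first
          | (intro jj hjj; fin_cases jj <;>
              (try simp only [f11_0, f11_1, f11_2, f11_3, f11_4, f11_5, f11_6, f11_7, f11_8,
                f11_9, f11_10, Matrix.cons_val_zero', Matrix.cons_val_succ',
                Matrix.cons_val_zero] at hjj ⊢) <;>
              first | (exfalso; omega) | norm_num)
          | linarith [mul_nonneg hθ00 hPsh0.le, mul_nonneg hθ10 hPs0.le,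
              mul_nonneg hθ10 hPsh0.le, mul_nonneg hθ20 hPs0.le,
              mul_nonneg hθ00 (show (0:ℝ) ≤ Pd + Psh by linarith),
              mul_nonneg hθ10 hMps,
              mul_nonneg hθ20 (show (0:ℝ) ≤ Ps + Pu by linarith),
              mul_le_of_le_one_left hPsh0.le hθ01, mul_le_of_le_one_left hPs0.le hθ11,
              mul_le_of_le_one_left hPsh0.le hθ11, mul_le_of_le_one_left hPs0.le hθ21,
              mul_le_of_le_one_left (show (0:ℝ) ≤ Pd + Psh by linarith) hθ01,
              mul_le_of_le_one_left hMps hθ11,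
              mul_le_of_le_one_left (show (0:ℝ) ≤ Ps + Pu by linarith) hθ21]
    have hxeq : x = ∑ i : Fin 8, w i • v i := by
      funext j
      rw [Finset.sum_apply]
      simp only [Pi.smul_apply, smul_eq_mul]
      fin_cases j <;>
        simp only [hwdef, hvdef, Fin.sum_univ_eight,
          f8_0, f8_1, f8_2, f8_3, f8_4, f8_5, f8_6, f8_7,
          f11_0, f11_1, f11_2, f11_3, f11_4, f11_5, f11_6, f11_7, f11_8, f11_9, f11_10,
          Matrix.cons_val_zero', Matrix.cons_val_succ', Matrix.cons_val_zero] <;>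
        simp only [← f11_0, ← f11_1, ← f11_2, ← f11_3, ← f11_4, ← f11_5, ← f11_6, ← f11_7,
          ← f11_8, ← f11_9, ← f11_10] <;>
        first
          | ring1
          | linear_combination hxe1
          | linear_combination -hxe1
          | linear_combination hxe2
          | linear_combination -hxe2
          | linear_combination -hθ1B
          | linear_combination hθ1B
          | linear_combination -hθ0B + θ0 * hxe1
          | linear_combination -hθ0B - θ0 * hxe1
          | linear_combination -hθ2B - θ2 * hxe2
          | linear_combination -hθ2B + θ2 * hxe2
    rw [hxeq]
    exact (convex_convexHull ℝ _).sum_mem (fun i _ => hw0 i) hwsum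
      (fun i _ => subset_convexHull ℝ _ (hvmem i))
end

section
/- Let P̃_down, P̃_start, P̃_shut ∈ [0,1] and define q' = [P̃_down − P̃_start]^+ − [P̃_shut − P̃_start]^+. Suppose q' ≥ 0 and minimum up time at least 2 (so J = 0). Then for binary u_t, s_t, d_{t+1} with s_t ≤ u_t, d_{t+1} ≤ u_t, s_t + d_{t+1} ≤ 1, the ramp-down inequality P̃_t − P̃_{t+1} ≤ u_t·P̃_down − s_t·[P̃_down − P̃_start]^+ + d_{t+1}(P̃_shut − P̃_down) implies, after renormalizing to original variables P = P̃(P_max − P_min) + u·P_min, the inequality P_{t−1}' − P_t' ≤ u_t·P_down + d_t·P_shut − s_{t−1}(P_down − P_start + P_min) − s_t(P_down + P_min) of Ostrowski et al. (indices shifted appropriately), assuming P_down > P_start − P_min. -/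
/-- (36)&(61) ⟹ (22). For a unit with minimum up time ≥ 2 (so J = 0) and
q' = [P̃down − P̃start]⁺ − [P̃shut − P̃start]⁺ ≥ 0, the normalized ramp-down inequality (80)
implies, after renormalizing to original variables, the ramp-down inequality (22) of
Ostrowski et al. (with indices shifted), assuming P_down > P_start − P_min. -/
theorem ineq80_implies_ineq22 (Pmin Pmax Pdown Pstart Pshut : ℝ) (hP : Pmin < Pmax)
    (Pt Pt1 : ℝ) (ut ut1 st st1 dt1 : ℝ)
    (hut : 0 ≤ ut ∧ ut ≤ 1) (hut1 : 0 ≤ ut1 ∧ ut1 ≤ 1)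
    (hst : 0 ≤ st ∧ st ≤ 1) (hst1 : 0 ≤ st1 ∧ st1 ≤ 1) (hdt1 : 0 ≤ dt1 ∧ dt1 ≤ 1)
    (hlogic : st1 - dt1 = ut1 - ut)
    (hstu : st ≤ ut) (hdt1u : dt1 ≤ ut) (hsd : st + dt1 ≤ 1)
    (hq : 0 ≤ max (Pdown / (Pmax - Pmin) - (Pstart - Pmin) / (Pmax - Pmin)) 0 -
      max ((Pshut - Pmin) / (Pmax - Pmin) - (Pstart - Pmin) / (Pmax - Pmin)) 0)
    (hds : Pdown > Pstart - Pmin)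
    (h80 : (Pt - ut * Pmin) / (Pmax - Pmin) - (Pt1 - ut1 * Pmin) / (Pmax - Pmin) ≤
      ut * (Pdown / (Pmax - Pmin)) -
        st * max (Pdown / (Pmax - Pmin) - (Pstart - Pmin) / (Pmax - Pmin)) 0 +
        dt1 * ((Pshut - Pmin) / (Pmax - Pmin) - Pdown / (Pmax - Pmin))) :
    Pt - Pt1 ≤ ut1 * Pdown + dt1 * Pshut - st * (Pdown - Pstart + Pmin) -
      st1 * (Pdown + Pmin) := by
  have hc : (0:ℝ) < Pmax - Pmin := by linarith
  have hmax : max (Pdown / (Pmax - Pmin) - (Pstart - Pmin) / (Pmax - Pmin)) 0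
      = (Pdown - (Pstart - Pmin)) / (Pmax - Pmin) := by
    rw [div_sub_div_same]
    exact max_eq_left (div_nonneg (by linarith) hc.le)
  rw [hmax] at h80
  have key := mul_le_mul_of_nonneg_right h80 hc.le
  have hne : Pmax - Pmin ≠ 0 := ne_of_gt hc
  field_simp at key
  have e1 : (st1 - dt1) * Pdown = (ut1 - ut) * Pdown := by rw [hlogic]
  have e2 : (st1 - dt1) * Pmin = (ut1 - ut) * Pmin := by rw [hlogic]
  nlinarith [key, e1, e2]
end

section
/- For binary state vectors over three periods, the eight quantities u_{t−1}, u_t, u_{t+1}, s_t, s_{t+1}, J² (indicator of pattern (0,0,1)), J³ (indicator of pattern (0,1,0)), and the all-ones vector e, viewed as column vectors indexed by the eight patterns (u_{t−1}, u_t, u_{t+1}) ∈ {0,1}^3, are linearly independent in ℝ^8, and every other state indicator listed (f_t, o_t, d_t, d_{t+1}, o_{t+1}, f_{t+1}, J¹, J⁴, ..., J⁸) is a linear combination of these eight; in particular J⁴ = s_t − J³, J⁷ = d_{t+1} − J³, J⁸ = u_t − s_t − d_{t+1} + J³, J⁵ = d_t − s_{t+1} + J², and f_t = e − s_t − u_{t−1}.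 -/
namespace UCStates

/-- The eight three-period on/off patterns (u_{t-1}, u_t, u_{t+1}). -/
abbrev Pat := Fin 2 × Fin 2 × Fin 2

/-- on-status at t-1 -/
def u1 : Pat → ℝ := fun p => ((p.1 : ℕ) : ℝ)
/-- on-status at t -/
def ut : Pat → ℝ := fun p => ((p.2.1 : ℕ) : ℝ)
/-- on-status at t+1 -/
def u2 : Pat → ℝ := fun p => ((p.2.2 : ℕ) : ℝ)
/-- startup at t -/
def st : Pat → ℝ := fun p => max (ut p - u1 p) 0
/-- startup at t+1 -/
def st1 : Pat → ℝ := fun p => max (u2 p - ut p) 0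
/-- shutdown at t -/
def dt : Pat → ℝ := fun p => max (u1 p - ut p) 0
/-- shutdown at t+1 -/
def dt1 : Pat → ℝ := fun p => max (ut p - u2 p) 0
/-- remains operational at t -/
def ot : Pat → ℝ := fun p => u1 p * ut p
/-- remains operational at t+1 -/
def ot1 : Pat → ℝ := fun p => ut p * u2 p
/-- remains off at t -/
def ft : Pat → ℝ := fun p => (1 - u1 p) * (1 - ut p)
/-- remains off at t+1 -/
def ft1 : Pat → ℝ := fun p => (1 - ut p) * (1 - u2 p)
/-- indicator of a single pattern -/
def ind (q : Pat) : Pat → ℝ := fun p => if p = q then 1 else 0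
/-- the all-ones vector -/
def e : Pat → ℝ := fun _ => 1

def J1 : Pat → ℝ := ind (0, 0, 0)
def J2 : Pat → ℝ := ind (0, 0, 1)
def J3 : Pat → ℝ := ind (0, 1, 0)
def J4 : Pat → ℝ := ind (0, 1, 1)
def J5 : Pat → ℝ := ind (1, 0, 0)
def J6 : Pat → ℝ := ind (1, 0, 1)
def J7 : Pat → ℝ := ind (1, 1, 0)
def J8 : Pat → ℝ := ind (1, 1, 1)

/-- the eight base vectors u_{t-1}, u_t, u_{t+1}, s_t, s_{t+1}, J², J³, e -/
def base : Fin 8 → (Pat → ℝ) := ![u1, ut, u2, st, st1, J2, J3, e]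

set_option maxHeartbeats 1000000 in
lemma eq_lemmas :
    ot = ut - st ∧ dt = st - ut + u1 ∧ dt1 = st1 - u2 + ut ∧ ot1 = u2 - st1 ∧
    ft = e - st - u1 ∧ ft1 = e - st1 - ut ∧
    J1 = e - st - u1 - J2 ∧ J4 = st - J3 ∧ J5 = st - ut + u1 - st1 + J2 ∧
    J6 = st1 - J2 ∧ J7 = st1 - u2 + ut - J3 ∧ J8 = u2 - st - st1 + J3 := by
  refine ⟨?_, ?_, ?_, ?_, ?_, ?_, ?_, ?_, ?_, ?_, ?_, ?_⟩ <;>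
  · funext ⟨a, b, c⟩
    fin_cases a <;> fin_cases b <;> fin_cases c <;>
      norm_num [u1, ut, u2, st, st1, dt, dt1, ot, ot1, ft, ft1, e,
        J1, J2, J3, J4, J5, J6, J7, J8, ind, Prod.ext_iff]

set_option maxHeartbeats 1000000

/-- The eight vectors u_{t-1}, u_t, u_{t+1}, s_t, s_{t+1}, J², J³, e
(indexed by the eight three-period patterns) are linearly independent in ℝ⁸, every other
state indicator lies in their span, and in particular J⁴ = s_t − J³, J⁷ = d_{t+1} − J³,
J⁸ = u_t − s_t − d_{t+1} + J³, J⁵ = d_t − s_{t+1} + J², and f_t = e − s_t − u_{t-1}. -/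
theorem base_linearIndependent_and_spans :
    LinearIndependent ℝ base ∧
    (∀ v ∈ ({ft, ot, dt, dt1, ot1, ft1, J1, J4, J5, J6, J7, J8} : Set (Pat → ℝ)),
      v ∈ Submodule.span ℝ (Set.range base)) ∧
    J4 = st - J3 ∧
    J7 = dt1 - J3 ∧
    J8 = ut - st - dt1 + J3 ∧
    J5 = dt - st1 + J2 ∧
    ft = e - st - u1 := by
  obtain ⟨hot, hdt, hdt1, hot1, hft, hft1, hJ1, hJ4, hJ5, hJ6, hJ7, hJ8⟩ := eq_lemmas
  set S := Submodule.span ℝ (Set.range base) with hS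
  have hu1 : u1 ∈ S := Submodule.subset_span ⟨0, rfl⟩
  have hut : ut ∈ S := Submodule.subset_span ⟨1, rfl⟩
  have hu2 : u2 ∈ S := Submodule.subset_span ⟨2, rfl⟩
  have hst : st ∈ S := Submodule.subset_span ⟨3, rfl⟩
  have hst1 : st1 ∈ S := Submodule.subset_span ⟨4, rfl⟩
  have hJ2m : J2 ∈ S := Submodule.subset_span ⟨5, rfl⟩
  have hJ3m : J3 ∈ S := Submodule.subset_span ⟨6, rfl⟩
  have hem : e ∈ S := Submodule.subset_span ⟨7, rfl⟩
  have hotm : ot ∈ S := hot ▸ S.sub_mem hut hst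
  have hdtm : dt ∈ S := hdt ▸ S.add_mem (S.sub_mem hst hut) hu1
  have hdt1m : dt1 ∈ S := hdt1 ▸ S.add_mem (S.sub_mem hst1 hu2) hut
  have hot1m : ot1 ∈ S := hot1 ▸ S.sub_mem hu2 hst1
  have hftm : ft ∈ S := hft ▸ S.sub_mem (S.sub_mem hem hst) hu1
  have hft1m : ft1 ∈ S := hft1 ▸ S.sub_mem (S.sub_mem hem hst1) hut
  have hJ1m : J1 ∈ S := hJ1 ▸ S.sub_mem (S.sub_mem (S.sub_mem hem hst) hu1) hJ2m
  have hJ4m : J4 ∈ S := hJ4 ▸ S.sub_mem hst hJ3m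
  have hJ5m : J5 ∈ S := hJ5 ▸ S.add_mem (S.sub_mem (S.add_mem (S.sub_mem hst hut) hu1) hst1) hJ2m
  have hJ6m : J6 ∈ S := hJ6 ▸ S.sub_mem hst1 hJ2m
  have hJ7m : J7 ∈ S := hJ7 ▸ S.sub_mem (S.add_mem (S.sub_mem hst1 hu2) hut) hJ3m
  have hJ8m : J8 ∈ S := hJ8 ▸ S.add_mem (S.sub_mem (S.sub_mem hu2 hst) hst1) hJ3m
  have hind : ∀ q : Pat, ind q ∈ S := by
    rintro ⟨a, b, c⟩
    fin_cases a <;> fin_cases b <;> fin_cases c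
    exacts [hJ1m, hJ2m, hJ3m, hJ4m, hJ5m, hJ6m, hJ7m, hJ8m]
  have htop : ⊤ ≤ S := by
    intro v _
    have hv : v = ∑ q : Pat, v q • ind q := by
      funext p
      simp [ind, Finset.sum_apply, mul_ite, Finset.sum_ite_eq]
    rw [hv]
    exact Submodule.sum_mem _ fun q _ => S.smul_mem _ (hind q)
  refine ⟨?_, ?_, ?_, ?_, ?_, ?_, hft⟩
  · apply linearIndependent_of_top_le_span_of_card_eq_finrank htop
    simp [Module.finrank_pi]
  · intro v hv
    simp only [Set.mem_insert_iff, Set.mem_singleton_iff] at hv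
    rcases hv with rfl|rfl|rfl|rfl|rfl|rfl|rfl|rfl|rfl|rfl|rfl|rfl <;>
      assumption
  · exact hJ4
  · rw [hJ7, hdt1]
  · rw [hJ8, hdt1]; ring
  · rw [hJ5, hdt]


end UCStates
end
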